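/- arXiv:2409.19277 — 5 statements merged into one kernel-verified Lean document; each statement's English description precedes it below -/
import Mathlib

section
/- Let n ≥ 2 and let 0 < ε < n/(27(n−1)). Then the evolution function F of the ε-Go-To-The-Average protocol is locally invertible: for every configuration z ∈ (ℝ²)ⁿ there exist an open set U ⊆ (ℝ²)ⁿ containing z and an open set V ⊆ (ℝ²)ⁿ containing F(z) such that F restricted to U is a bijection from U onto V. -/
noncomputable section

/-- The Euclidean plane ℝ². -/
abbrev Plane := EuclideanSpace ℝ (Fin 2)

/-- The bump function `b(X) = exp(−X²/(1−X²))` for `X < 1` and `b(X) = 0` for `X ≥ 1`. -/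
def bump (X : ℝ) : ℝ :=
  if X < 1 then Real.exp (-(X ^ 2) / (1 - X ^ 2)) else 0

/-- The evolution function of the ε-Go-To-The-Average protocol:
`F(z)_i = z_i + (ε/n) · Σ_j b(‖z_i − z_j‖²) · (z_j − z_i)`. -/
def goToTheAverage (n : ℕ) (ε : ℝ) (z : Fin n → Plane) : Fin n → Plane :=
  fun i => z i + (ε / n) • ∑ j, bump (‖z i - z j‖ ^ 2) • (z j - z i)

/-!
Write `F(z) = z + (ε/n) • Φ(z)` with `Φ(z)_i = Σ_j φ(z_j − z_i)` and `φ(v) = b(‖v‖²) v`.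
Splitting `φ(v) − φ(w) = b(‖v‖²)(v − w) + (b(‖v‖²) − b(‖w‖²)) w` with `‖w‖ ≤ ‖v‖`, and using that
the profile `r ↦ b(r²) = e · exp(−1/(1 − r⁴))` is `32/e`-Lipschitz (elementary bounds on
`t ↦ exp(−1/t)`), shows that `φ` is `27/2`-Lipschitz. The term `j = i` of `Φ` vanishes, so `Φ` is
`27(n − 1)`-Lipschitz for the sup norm and `F − id` is a contraction when `ε < n/(27(n − 1))`.
Banach's fixed point theorem for `x ↦ y − (F(x) − x)` then makes `F` a bijection of the whole
space, so one can take `U = V = (ℝ²)ⁿ`.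
-/

open Real Function

theorem expNegInvGlue_le_exp_neg_one_mul {t : ℝ} (ht : 0 ≤ t) :
    expNegInvGlue t ≤ exp (-1) * t := by
  rcases ht.eq_or_lt with rfl | ht
  · simp [expNegInvGlue.zero_of_nonpos]
  have h := mul_le_mul_of_nonneg_left (mul_exp_neg_le_exp_neg_one t⁻¹) ht.le
  rw [← mul_assoc, mul_inv_cancel₀ ht.ne', one_mul, mul_comm t] at h
  simpa [expNegInvGlue, ht.not_ge] using h

theorem expNegInvGlue_le_sq (t : ℝ) : expNegInvGlue t ≤ 4 * exp (-1) ^ 2 * t ^ 2 := by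
  rcases le_or_gt t 0 with ht | ht
  · rw [expNegInvGlue.zero_of_nonpos ht]; positivity
  have hsq : expNegInvGlue t = expNegInvGlue (2 * t) ^ 2 := by
    simp only [expNegInvGlue, not_le.2 ht, not_le.2 (by positivity : 0 < 2 * t), if_false,
      ← exp_nat_mul]
    congr 1; field_simp; ring
  calc expNegInvGlue t = expNegInvGlue (2 * t) ^ 2 := hsq
    _ ≤ (exp (-1) * (2 * t)) ^ 2 := by
        gcongr
        exacts [expNegInvGlue.nonneg _, expNegInvGlue_le_exp_neg_one_mul (by positivity)]
    _ = 4 * exp (-1) ^ 2 * t ^ 2 := by ring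

theorem expNegInvGlue_sub_le {a b : ℝ} (hab : a ≤ b) :
    expNegInvGlue b - expNegInvGlue a ≤ 8 * exp (-1) ^ 2 * (b - a) := by
  have hba : 0 ≤ b - a := sub_nonneg.2 hab
  rcases le_or_gt b 0 with hb | hb
  · simp only [expNegInvGlue.zero_of_nonpos hb, expNegInvGlue.zero_of_nonpos (hab.trans hb),
      sub_self]
    positivity
  rcases lt_or_ge (2 * a) b with hab' | hab'
  · have h4 : 1 ≤ 4 * exp (-1) := by linarith [exp_neg_one_gt_d9]
    calc expNegInvGlue b - expNegInvGlue a ≤ exp (-1) * b := by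
          linarith [expNegInvGlue_le_exp_neg_one_mul hb.le, expNegInvGlue.nonneg a]
      _ ≤ exp (-1) * (2 * (b - a)) := by gcongr; linarith
      _ ≤ 8 * exp (-1) ^ 2 * (b - a) := by
          nlinarith [mul_nonneg (mul_nonneg (exp_pos (-1)).le hba) (sub_nonneg.2 h4)]
  have ha : 0 < a := by linarith
  have hga : expNegInvGlue a = expNegInvGlue b * exp (-(a⁻¹ - b⁻¹)) := by
    simp only [expNegInvGlue, not_le.2 ha, not_le.2 hb, if_false, ← exp_add]
    ring_nf
  calc expNegInvGlue b - expNegInvGlue a ≤ expNegInvGlue b * (a⁻¹ - b⁻¹) := by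
        rw [hga]; nlinarith [one_sub_le_exp_neg (a⁻¹ - b⁻¹), expNegInvGlue.nonneg b]
    _ = expNegInvGlue b * (b - a) / (a * b) := by field_simp
    _ ≤ 4 * exp (-1) ^ 2 * b ^ 2 * (b - a) / (b ^ 2 / 2) := by
        gcongr ?_ * _ / ?_
        · exact expNegInvGlue_le_sq b
        · nlinarith
    _ = 8 * exp (-1) ^ 2 * (b - a) := by field_simp; ring

theorem bump_nonneg (X : ℝ) : 0 ≤ bump X := by
  unfold bump; split_ifs <;> positivity

theorem bump_of_one_le {X : ℝ} (hX : 1 ≤ X) : bump X = 0 := by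
  simp [bump, hX.not_gt]

theorem bump_le_one {X : ℝ} (hX : 0 ≤ X) : bump X ≤ 1 := by
  unfold bump
  split_ifs with h
  · exact exp_le_one_iff.2 (div_nonpos_of_nonpos_of_nonneg (by nlinarith) (by nlinarith))
  · exact zero_le_one

theorem bump_eq_exp_one_mul_expNegInvGlue {X : ℝ} (hX : 0 ≤ X) :
    bump X = exp 1 * expNegInvGlue (1 - X ^ 2) := by
  unfold bump
  split_ifs with h
  · have h1 : 0 < 1 - X ^ 2 := by nlinarith
    rw [expNegInvGlue, if_neg h1.not_ge, ← exp_add]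
    congr 1
    field_simp
    ring
  · rw [expNegInvGlue.zero_of_nonpos (by nlinarith), mul_zero]

theorem bump_sq_le_bump_sq {s t : ℝ} (ht : 0 ≤ t) (hts : t ≤ s) :
    bump (s ^ 2) ≤ bump (t ^ 2) := by
  rw [bump_eq_exp_one_mul_expNegInvGlue (by positivity),
    bump_eq_exp_one_mul_expNegInvGlue (by positivity)]
  gcongr
  exact expNegInvGlue.monotone (by gcongr)

theorem bump_sq_sub_bump_sq_le {s t : ℝ} (ht : 0 ≤ t) (hts : t ≤ s) :
    bump (t ^ 2) - bump (s ^ 2) ≤ 32 * exp (-1) * (s - t) := by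
  have key : ∀ s, t ≤ s → s ≤ 1 → bump (t ^ 2) - bump (s ^ 2) ≤ 32 * exp (-1) * (s - t) := by
    intro s hts hs1
    have hs : 0 ≤ s := ht.trans hts
    have h4 : s ^ 4 - t ^ 4 ≤ 4 * (s - t) := by
      have : (s + t) * (s ^ 2 + t ^ 2) ≤ 4 := by nlinarith
      nlinarith [mul_le_mul_of_nonneg_right this (sub_nonneg.2 hts)]
    rw [bump_eq_exp_one_mul_expNegInvGlue (by positivity),
      bump_eq_exp_one_mul_expNegInvGlue (by positivity), ← mul_sub]
    calc exp 1 * (expNegInvGlue (1 - (t ^ 2) ^ 2) - expNegInvGlue (1 - (s ^ 2) ^ 2))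
        ≤ exp 1 * (8 * exp (-1) ^ 2 * ((1 - (t ^ 2) ^ 2) - (1 - (s ^ 2) ^ 2))) := by
          gcongr
          exact expNegInvGlue_sub_le (by nlinarith [pow_le_pow_left₀ ht hts 4])
      _ = 8 * exp (-1) * (s ^ 4 - t ^ 4) := by
          have h : exp 1 * exp (-1) = 1 := by rw [← exp_add]; norm_num
          linear_combination (8 * exp (-1) * (s ^ 4 - t ^ 4)) * h
      _ ≤ 32 * exp (-1) * (s - t) := by nlinarith [exp_pos (-1)]
  rcases le_total s 1 with hs1 | hs1
  · exact key s hts hs1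
  rcases le_total 1 t with ht1 | ht1
  · rw [bump_of_one_le (by nlinarith), bump_of_one_le (by nlinarith), sub_self]
    nlinarith [exp_pos (-1)]
  calc bump (t ^ 2) - bump (s ^ 2) = bump (t ^ 2) - bump (1 ^ 2) := by
        rw [bump_of_one_le (one_le_pow₀ hs1), one_pow, bump_of_one_le le_rfl]
    _ ≤ 32 * exp (-1) * (1 - t) := key 1 ht1 le_rfl
    _ ≤ 32 * exp (-1) * (s - t) := by gcongr

theorem norm_bump_smul_sub_bump_smul_le {E : Type*} [SeminormedAddCommGroup E] [NormedSpace ℝ E]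
    (v w : E) : ‖bump (‖v‖ ^ 2) • v - bump (‖w‖ ^ 2) • w‖ ≤ 27 / 2 * ‖v - w‖ := by
  wlog hwv : ‖w‖ ≤ ‖v‖ generalizing v w
  · rw [norm_sub_rev, norm_sub_rev v]
    exact this w v (le_of_not_ge hwv)
  have hdiff : |bump (‖v‖ ^ 2) - bump (‖w‖ ^ 2)| * ‖w‖ ≤ 25 / 2 * ‖v - w‖ := by
    rw [abs_sub_comm, abs_of_nonneg (sub_nonneg.2 (bump_sq_le_bump_sq (norm_nonneg w) hwv))]
    rcases le_total 1 ‖w‖ with hw1 | hw1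
    · rw [bump_of_one_le (one_le_pow₀ hw1), bump_of_one_le (one_le_pow₀ (hw1.trans hwv)),
        sub_self, zero_mul]
      positivity
    calc (bump (‖w‖ ^ 2) - bump (‖v‖ ^ 2)) * ‖w‖ ≤ bump (‖w‖ ^ 2) - bump (‖v‖ ^ 2) :=
          mul_le_of_le_one_right (sub_nonneg.2 (bump_sq_le_bump_sq (norm_nonneg w) hwv)) hw1
      _ ≤ 32 * exp (-1) * (‖v‖ - ‖w‖) := bump_sq_sub_bump_sq_le (norm_nonneg w) hwv
      _ ≤ 25 / 2 * ‖v - w‖ := by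
          gcongr
          · linarith [exp_neg_one_lt_d9]
          · exact norm_sub_norm_le v w
  calc ‖bump (‖v‖ ^ 2) • v - bump (‖w‖ ^ 2) • w‖
      = ‖bump (‖v‖ ^ 2) • (v - w) + (bump (‖v‖ ^ 2) - bump (‖w‖ ^ 2)) • w‖ := by
        rw [smul_sub, sub_smul, sub_add_sub_cancel]
    _ ≤ bump (‖v‖ ^ 2) * ‖v - w‖ + |bump (‖v‖ ^ 2) - bump (‖w‖ ^ 2)| * ‖w‖ := by
        grw [norm_add_le, norm_smul, norm_smul, Real.norm_of_nonneg (bump_nonneg _),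
          Real.norm_eq_abs]
    _ ≤ 1 * ‖v - w‖ + 25 / 2 * ‖v - w‖ := by
        gcongr
        exact bump_le_one (by positivity)
    _ = 27 / 2 * ‖v - w‖ := by ring

theorem lipschitzWith_bump_smul {E : Type*} [SeminormedAddCommGroup E] [NormedSpace ℝ E] :
    LipschitzWith (27 / 2) fun v : E => bump (‖v‖ ^ 2) • v :=
  lipschitzWith_iff_norm_sub_le.2 fun v w => by
    simpa using norm_bump_smul_sub_bump_smul_le v w

theorem LipschitzWith.sum_comp_sub {ι E F : Type*} [Fintype ι] [SeminormedAddCommGroup E]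
    [SeminormedAddCommGroup F] {φ : E → F} {K : NNReal} (hφ : LipschitzWith K φ) (h0 : φ 0 = 0) :
    LipschitzWith (2 * K * (Fintype.card ι - 1 : ℕ))
      fun (z : ι → E) (i : ι) => ∑ j, φ (z j - z i) := by
  classical
  refine lipschitzWith_iff_norm_sub_le.2 fun x y =>
    (pi_norm_le_iff_of_nonneg (by positivity)).2 fun i => ?_
  have hterm : ∀ j, ‖φ (x j - x i) - φ (y j - y i)‖ ≤ 2 * K * ‖x - y‖ := fun j =>
    calc ‖φ (x j - x i) - φ (y j - y i)‖ ≤ K * ‖(x - y) j - (x - y) i‖ := by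
          simpa [sub_sub_sub_comm] using hφ.norm_sub_le (x j - x i) (y j - y i)
      _ ≤ K * (‖x - y‖ + ‖x - y‖) := by
          gcongr
          exact (_root_.norm_sub_le _ _).trans
            (add_le_add (norm_le_pi_norm _ j) (norm_le_pi_norm _ i))
      _ = 2 * K * ‖x - y‖ := by ring
  calc ‖∑ j, φ (x j - x i) - ∑ j, φ (y j - y i)‖
      = ‖∑ j ∈ Finset.univ.erase i, (φ (x j - x i) - φ (y j - y i))‖ := by
        rw [← Finset.sum_sub_distrib, ← Finset.add_sum_erase _ _ (Finset.mem_univ i)]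
        simp [h0]
    _ ≤ ∑ j ∈ Finset.univ.erase i, 2 * K * ‖x - y‖ :=
        norm_sum_le_of_le _ fun j _ => hterm j
    _ = ↑(2 * K * (Fintype.card ι - 1 : ℕ)) * ‖x - y‖ := by
        rw [Finset.sum_const, Finset.card_erase_of_mem (Finset.mem_univ i), Finset.card_univ,
          nsmul_eq_mul]
        simp only [NNReal.coe_mul, NNReal.coe_natCast, NNReal.coe_ofNat]
        ring

theorem bijective_of_lipschitzWith_sub_self {E : Type*} [NormedAddCommGroup E] [CompleteSpace E]
    {f : E → E} {K : NNReal} (hK : K < 1) (hf : LipschitzWith K fun x => f x - x) :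
    Bijective f := by
  refine (bijective_iff_existsUnique f).2 fun y => ?_
  have hg : ContractingWith K fun x => y - (f x - x) :=
    ⟨hK, lipschitzWith_iff_norm_sub_le.2 fun a b => by
      simpa [norm_sub_rev] using hf.norm_sub_le b a⟩
  have hfix : ∀ x, IsFixedPt (fun x => y - (f x - x)) x ↔ f x = y := fun x => by
    rw [IsFixedPt, sub_eq_iff_eq_add, add_sub_cancel, eq_comm]
  exact ⟨_, (hfix _).1 hg.fixedPoint_isFixedPt, fun x hx => hg.fixedPoint_unique ((hfix x).2 hx)⟩

theorem goToTheAverage_eq_add_smul (n : ℕ) (ε : ℝ) (z : Fin n → Plane) :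
    goToTheAverage n ε z =
      z + (ε / n) • fun i => ∑ j, bump (‖z j - z i‖ ^ 2) • (z j - z i) := by
  ext1 i
  simp only [goToTheAverage, Pi.add_apply, Pi.smul_apply, norm_sub_rev (z i)]

theorem lipschitzWith_goToTheAverage_sub_self (n : ℕ) (ε : ℝ) :
    LipschitzWith (‖ε / n‖₊ * (2 * (27 / 2) * (n - 1 : ℕ))) fun z => goToTheAverage n ε z - z := by
  have h := (lipschitzWith_smul (ε / n)).comp
    ((lipschitzWith_bump_smul (E := Plane)).sum_comp_sub (ι := Fin n) (by simp))
  rw [Fintype.card_fin] at h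
  refine lipschitzWith_iff_norm_sub_le.2 fun x y => ?_
  simpa only [goToTheAverage_eq_add_smul, add_sub_cancel_left, Function.comp_apply] using
    h.norm_sub_le x y

theorem div_mul_mul_sub_one_lt_one {n : ℕ} {ε c : ℝ} (hc : 0 < c)
    (hε : ε < (n : ℝ) / (c * ((n : ℝ) - 1))) : ε / n * (c * ((n - 1 : ℕ) : ℝ)) < 1 := by
  rcases le_or_gt n 1 with hn | hn
  · simp [Nat.sub_eq_zero_of_le hn]
  have hn1 : (1 : ℝ) < n := by exact_mod_cast hn
  rw [Nat.cast_sub hn.le, Nat.cast_one, div_mul_eq_mul_div, div_lt_one (by linarith)]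
  rw [lt_div_iff₀ (by nlinarith)] at hε
  linarith

theorem goToTheAverage_locally_invertible_general
    (n : ℕ) (ε : ℝ) (hε : 0 < ε) (hε' : ε < (n : ℝ) / (27 * ((n : ℝ) - 1))) :
    ∀ z : Fin n → Plane, ∃ U V : Set (Fin n → Plane),
      IsOpen U ∧ IsOpen V ∧ z ∈ U ∧ goToTheAverage n ε z ∈ V ∧
        Set.BijOn (goToTheAverage n ε) U V := by
  have hK : ‖ε / n‖₊ * (2 * (27 / 2) * (n - 1 : ℕ)) < 1 := by
    rw [← NNReal.coe_lt_one]
    convert div_mul_mul_sub_one_lt_one (by norm_num) hε' using 1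
    simp only [NNReal.coe_mul, coe_nnnorm, NNReal.coe_natCast, NNReal.coe_ofNat, NNReal.coe_div,
      Real.norm_of_nonneg (by positivity : 0 ≤ ε / n)]
    ring
  intro z
  exact ⟨Set.univ, Set.univ, isOpen_univ, isOpen_univ, Set.mem_univ z, Set.mem_univ _,
    (bijective_of_lipschitzWith_sub_self hK
      (lipschitzWith_goToTheAverage_sub_self n ε)).bijOn_univ⟩

theorem goToTheAverage_locally_invertible
    (n : ℕ) (hn : 2 ≤ n) (ε : ℝ) (hε : 0 < ε) (hε' : ε < (n : ℝ) / (27 * ((n : ℝ) - 1))) :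
    ∀ z : Fin n → Plane, ∃ U V : Set (Fin n → Plane),
      IsOpen U ∧ IsOpen V ∧ z ∈ U ∧ goToTheAverage n ε z ∈ V ∧
        Set.BijOn (goToTheAverage n ε) U V :=
  goToTheAverage_locally_invertible_general n ε hε hε'
end
end

section
/- Let n ≥ 2 and let 0 < ε < n/(27(n−1)). Then for every configuration z ∈ (ℝ²)ⁿ, the (Fréchet) derivative of the ε-Go-To-The-Average evolution function F at z is an invertible linear map from ℝ^{2n} to ℝ^{2n}; equivalently, the 2n×2n Jacobian matrix DF(z) is invertible at every point z. -/
noncomputable section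

/-!
Write `F(z) = z + (ε/n) Φ(z)` with `Φ(z)_i = Σ_j G(z_j - z_i)` and `G(x) = b(‖x‖²) x`.
The derivative of `G` at `w` is `v ↦ b(c) v + 2 b'(c) ⟪w, v⟫ w` with `c = ‖w‖²`, of norm at most
`b(c) (1 + 4c²/(1-c²)²) = (1 + 2u)² e^{-u} ≤ 8` where `u = c²/(1-c²)`. Each component of `DΦ`
involves `n - 1` such terms applied to differences `v_j - v_i`, so `‖DΦ‖ ≤ 16 (n-1)` and
`‖DF(z) - 1‖ ≤ 16 ε (n-1)/n < 1`; hence `DF(z)` is invertible by the Neumann series.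
-/

open Real

lemma one_add_two_mul_sq_mul_exp_neg_le {u : ℝ} (hu : 0 ≤ u) : (1 + 2 * u) ^ 2 * exp (-u) ≤ 8 := by
  rw [exp_neg, ← div_eq_mul_inv, div_le_iff₀ (exp_pos u)]
  nlinarith [quadratic_le_exp_of_nonneg hu]

-- Differentiability of `bump` at `X = 1` comes from this identity with Mathlib's flat function.
lemma bump_eq_mul_expNegInvGlue {X : ℝ} (hX : -1 < X) :
    bump X = exp 1 * expNegInvGlue (1 - X ^ 2) := by
  unfold bump
  split_ifs with h
  · have hy : 0 < 1 - X ^ 2 := by nlinarith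
    rw [expNegInvGlue, if_neg hy.not_ge, ← exp_add]
    congr 1
    field_simp
    ring
  · rw [expNegInvGlue.zero_of_nonpos (by nlinarith), mul_zero]

lemma hasDerivAt_bump {X : ℝ} (hX : -1 < X) :
    HasDerivAt bump (-(2 * X) * ((1 - X ^ 2)⁻¹) ^ 2 * bump X) X := by
  have hglue : HasDerivAt expNegInvGlue (((1 - X ^ 2)⁻¹) ^ 2 * expNegInvGlue (1 - X ^ 2))
      (1 - X ^ 2) := by
    simpa using expNegInvGlue.hasDerivAt_polynomial_eval_inv_mul 1 (1 - X ^ 2)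
  have hcomp := (hglue.comp X (((hasDerivAt_pow 2 X).const_sub 1))).const_mul (exp 1)
  refine (hcomp.congr_of_eventuallyEq ?_).congr_deriv ?_
  · filter_upwards [Ioi_mem_nhds hX] with x hx
    exact bump_eq_mul_expNegInvGlue hx
  · rw [bump_eq_mul_expNegInvGlue hX]
    ring

lemma bump_mul_one_add_le {X : ℝ} (hX : -1 < X) :
    bump X * (1 + 4 * X ^ 2 * ((1 - X ^ 2)⁻¹) ^ 2) ≤ 8 := by
  rcases lt_or_ge X 1 with h | h
  · have hy : 0 < 1 - X ^ 2 := by nlinarith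
    set u := X ^ 2 / (1 - X ^ 2) with hu
    have hbump : bump X = exp (-u) := by rw [bump, if_pos h, hu, neg_div]
    have hfactor : 1 + 4 * X ^ 2 * ((1 - X ^ 2)⁻¹) ^ 2 = (1 + 2 * u) ^ 2 := by
      rw [hu]; field_simp; ring
    rw [hbump, hfactor, mul_comm]
    exact one_add_two_mul_sq_mul_exp_neg_le (by positivity)
  · rw [bump, if_neg h.not_gt, zero_mul]
    norm_num

section Radial

variable {E : Type*} [NormedAddCommGroup E] [InnerProductSpace ℝ E]

lemma hasFDerivAt_smul_self_of_norm_sq {f : ℝ → ℝ} {f' : ℝ} {w : E}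
    (hf : HasDerivAt f f' (‖w‖ ^ 2)) :
    HasFDerivAt (fun x : E => f (‖x‖ ^ 2) • x)
      (f (‖w‖ ^ 2) • ContinuousLinearMap.id ℝ E + (f' • 2 • innerSL ℝ w).smulRight w) w :=
  (hf.comp_hasFDerivAt w (hasStrictFDerivAt_norm_sq w).hasFDerivAt).smul (hasFDerivAt_id w)

lemma norm_smul_id_add_smulRight_innerSL_le (a b : ℝ) (w : E) :
    ‖a • ContinuousLinearMap.id ℝ E + (b • 2 • innerSL ℝ w).smulRight w‖
      ≤ |a| + 2 * ‖w‖ ^ 2 * |b| := by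
  calc _ ≤ ‖a • ContinuousLinearMap.id ℝ E‖ + ‖(b • 2 • innerSL ℝ w).smulRight w‖ :=
        norm_add_le _ _
    _ ≤ |a| * 1 + |b| * (2 * ‖w‖) * ‖w‖ := by
        rw [norm_smul, ContinuousLinearMap.norm_smulRight_apply, norm_smul, Real.norm_eq_abs,
          Real.norm_eq_abs]
        gcongr
        · exact ContinuousLinearMap.norm_id_le
        · simpa [innerSL_apply_norm] using norm_nsmul_le (n := 2) (a := innerSL ℝ w)
    _ = |a| + 2 * ‖w‖ ^ 2 * |b| := by ring

lemma exists_hasFDerivAt_bump_smul_self (w : E) :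
    ∃ D : E →L[ℝ] E, HasFDerivAt (fun x : E => bump (‖x‖ ^ 2) • x) D w ∧ ‖D‖ ≤ 8 := by
  have hX : -1 < ‖w‖ ^ 2 := by linarith [sq_nonneg ‖w‖]
  refine ⟨_, hasFDerivAt_smul_self_of_norm_sq (hasDerivAt_bump hX),
    (norm_smul_id_add_smulRight_innerSL_le _ _ w).trans ?_⟩
  have hb : 0 ≤ bump (‖w‖ ^ 2) := by unfold bump; split_ifs <;> positivity
  calc _ = bump (‖w‖ ^ 2) * (1 + 4 * (‖w‖ ^ 2) ^ 2 * ((1 - (‖w‖ ^ 2) ^ 2)⁻¹) ^ 2) := by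
        rw [abs_of_nonneg hb, abs_mul, abs_mul, abs_neg, abs_of_nonneg hb,
          abs_of_nonneg (by positivity : (0:ℝ) ≤ 2 * ‖w‖ ^ 2), abs_of_nonneg (sq_nonneg _)]
        ring
    _ ≤ 8 := bump_mul_one_add_le hX

end Radial

section Pairwise

variable {ι E : Type*} [Fintype ι] [NormedAddCommGroup E] [NormedSpace ℝ E]

def pairwiseSum (G : E → E) (z : ι → E) : ι → E := fun i => ∑ j, G (z j - z i)

lemma hasFDerivAt_pairwiseSum {G : E → E} {D : E → E →L[ℝ] E}
    (hG : ∀ w, HasFDerivAt G (D w) w) (z : ι → E) :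
    HasFDerivAt (pairwiseSum G)
      (ContinuousLinearMap.pi fun i => ∑ j, (D (z j - z i)).comp
        (ContinuousLinearMap.proj (R := ℝ) (φ := fun _ : ι => E) j - ContinuousLinearMap.proj i)) z :=
  hasFDerivAt_pi.2 fun i => HasFDerivAt.fun_sum fun j _ =>
    (hG _).comp z ((hasFDerivAt_apply j z).sub (hasFDerivAt_apply i z))

lemma norm_pi_sum_comp_proj_sub_le [DecidableEq ι] [Nonempty ι] {D : ι → ι → E →L[ℝ] E} {L : ℝ}
    (hD : ∀ i j, ‖D i j‖ ≤ L) :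
    ‖ContinuousLinearMap.pi fun i => ∑ j, (D i j).comp
        (ContinuousLinearMap.proj (R := ℝ) (φ := fun _ : ι => E) j - ContinuousLinearMap.proj i)‖
      ≤ 2 * L * (Fintype.card ι - 1) := by
  obtain ⟨i₀⟩ := ‹Nonempty ι›
  have hL : 0 ≤ L := (norm_nonneg _).trans (hD i₀ i₀)
  have hcard : (1 : ℝ) ≤ Fintype.card ι := by exact_mod_cast Fintype.card_pos
  refine ContinuousLinearMap.opNorm_le_bound _ (by nlinarith) fun v => ?_
  refine (pi_norm_le_iff_of_nonneg (by positivity)).2 fun i => ?_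
  have hterm : ∀ j, ‖D i j (v j - v i)‖ ≤ L * (2 * ‖v‖) := fun j =>
    (D i j).le_of_opNorm_le (hD i j) _ |>.trans <| by
      gcongr
      exact (norm_sub_le _ _).trans (by linarith [norm_le_pi_norm v j, norm_le_pi_norm v i])
  calc _ = ‖∑ j, D i j (v j - v i)‖ := by simp
    _ = ‖∑ j ∈ Finset.univ.erase i, D i j (v j - v i)‖ := by
        rw [Finset.sum_erase _ (by simp)]
    _ ≤ ∑ j ∈ Finset.univ.erase i, L * (2 * ‖v‖) := norm_sum_le_of_le _ fun j _ => hterm j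
    _ = 2 * L * (Fintype.card ι - 1) * ‖v‖ := by
        rw [Finset.sum_const, Finset.card_erase_of_mem (Finset.mem_univ i), Finset.card_univ,
          nsmul_eq_mul, Nat.cast_sub Fintype.card_pos]
        push_cast
        ring

lemma exists_hasFDerivAt_pairwiseSum_norm_le [Nonempty ι] {G : E → E} {L : ℝ}
    (hG : ∀ w, ∃ D : E →L[ℝ] E, HasFDerivAt G D w ∧ ‖D‖ ≤ L) (z : ι → E) :
    ∃ M : (ι → E) →L[ℝ] (ι → E), HasFDerivAt (pairwiseSum G) M z ∧
      ‖M‖ ≤ 2 * L * (Fintype.card ι - 1) := by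
  classical
  choose D hD hDle using hG
  exact ⟨_, hasFDerivAt_pairwiseSum hD z, norm_pi_sum_comp_proj_sub_le fun i j => hDle _⟩

end Pairwise

lemma goToTheAverage_eq_add_smul_pairwiseSum (n : ℕ) (ε : ℝ) :
    goToTheAverage n ε =
      fun z => z + (ε / n) • pairwiseSum (fun x : Plane => bump (‖x‖ ^ 2) • x) z := by
  ext z i : 2
  simp only [goToTheAverage, pairwiseSum, Pi.add_apply, Pi.smul_apply, norm_sub_rev (z i)]

theorem goToTheAverage_deriv_invertible_general
    (n : ℕ) (ε : ℝ) (hε : 0 < ε)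
    (hε' : ε < (n : ℝ) / (27 * ((n : ℝ) - 1)))
    (z : Fin n → Plane) :
    Function.Bijective (fderiv ℝ (goToTheAverage n ε) z) := by
  have hn : 0 < (n : ℝ) - 1 := by
    by_contra! h
    exact (hε.trans hε').not_ge (div_nonpos_of_nonneg_of_nonpos n.cast_nonneg (by linarith))
  have : Nonempty (Fin n) := ⟨⟨0, by exact_mod_cast (by linarith : (0 : ℝ) < n)⟩⟩
  obtain ⟨M, hM, hMle⟩ := exists_hasFDerivAt_pairwiseSum_norm_le
    (exists_hasFDerivAt_bump_smul_self (E := Plane)) z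
  rw [Fintype.card_fin] at hMle
  have hF : HasFDerivAt (goToTheAverage n ε) (1 + (ε / n) • M) z := by
    rw [goToTheAverage_eq_add_smul_pairwiseSum]
    exact (hasFDerivAt_id z).add (hM.const_smul (ε / n))
  have hsmall : ‖-((ε / n) • M)‖ < 1 := by
    rw [norm_neg, norm_smul, Real.norm_of_nonneg (by positivity)]
    rw [lt_div_iff₀ (by positivity)] at hε'
    calc ε / n * ‖M‖ ≤ ε / n * (2 * 8 * (n - 1)) := by gcongr
      _ < 1 := by rw [div_mul_eq_mul_div, div_lt_one (by linarith)]; nlinarith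
  rw [hF.fderiv, ← ContinuousLinearMap.isUnit_iff_bijective, ← sub_neg_eq_add]
  exact isUnit_one_sub_of_norm_lt_one hsmall

theorem goToTheAverage_deriv_invertible
    (n : ℕ) (hn : 2 ≤ n) (ε : ℝ) (hε : 0 < ε)
    (hε' : ε < (n : ℝ) / (27 * ((n : ℝ) - 1)))
    (z : Fin n → Plane) :
    Function.Bijective (fderiv ℝ (goToTheAverage n ε) z) :=
  goToTheAverage_deriv_invertible_general n ε hε hε' z
end
end

section
/- Let k ≥ 3, let 0 ≤ ε ≤ 1, and let b : ZMod k → ℝ² be cyclically indexed points with ‖b_i − b_{i+1}‖ ≤ 1 for all i (consecutive points at Euclidean distance at most 1). Let b′ be the result of one ε-Go-to-the-Middle step, b′_i = (1−ε)·b_i + (ε/2)·(b_{i−1} + b_{i+1}). Then for every index i: ‖b_i − b′_{i+1}‖ ≤ 1, ‖b_{i+1} − b′_i‖ ≤ 1, and ‖b_i − b′_i‖ ≤ ε. -/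
noncomputable section

/-- One step of the ε-Go-to-the-Middle algorithm on cyclically indexed points:
each point moves an ε-fraction towards the midpoint of its two neighbors. -/
def gtmStep (k : ℕ) (ε : ℝ) (b : ZMod k → Plane) : ZMod k → Plane :=
  fun i => (1 - ε) • b i + (ε / 2) • (b (i - 1) + b (i + 1))

theorem gtm_distance_bounds_one_step
    (k : ℕ) (hk : 3 ≤ k)
    (ε : ℝ) (hε : 0 ≤ ε) (hε' : ε ≤ 1)
    (b : ZMod k → Plane)
    (hdist : ∀ i : ZMod k, ‖b i - b (i + 1)‖ ≤ 1) :
    ∀ i : ZMod k,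
      ‖b i - gtmStep k ε b (i + 1)‖ ≤ 1 ∧
      ‖b (i + 1) - gtmStep k ε b i‖ ≤ 1 ∧
      ‖b i - gtmStep k ε b i‖ ≤ ε := by
  intro i
  have h2 : ∀ j : ZMod k, ‖b j - b (j + 1 + 1)‖ ≤ 2 := by
    intro j
    calc ‖b j - b (j + 1 + 1)‖
        ≤ ‖b j - b (j + 1)‖ + ‖b (j + 1) - b (j + 1 + 1)‖ :=
          norm_sub_le_norm_sub_add_norm_sub _ _ _
      _ ≤ 1 + 1 := add_le_add (hdist j) (hdist (j + 1))
      _ = 2 := by norm_num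
  have hii : i + 1 - 1 = i := by ring
  have him : i - 1 + 1 = i := by ring
  refine ⟨?_, ?_, ?_⟩
  · have e1 : b i - gtmStep k ε b (i + 1)
        = (1 - ε) • (b i - b (i + 1)) + (ε / 2) • (b i - b (i + 1 + 1)) := by
      simp only [gtmStep, hii]
      module
    rw [e1]
    calc ‖(1 - ε) • (b i - b (i + 1)) + (ε / 2) • (b i - b (i + 1 + 1))‖
        ≤ ‖(1 - ε) • (b i - b (i + 1))‖ + ‖(ε / 2) • (b i - b (i + 1 + 1))‖ :=
          norm_add_le _ _
      _ = |1 - ε| * ‖b i - b (i + 1)‖ + |ε / 2| * ‖b i - b (i + 1 + 1)‖ := by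
          rw [norm_smul, norm_smul, Real.norm_eq_abs, Real.norm_eq_abs]
      _ = (1 - ε) * ‖b i - b (i + 1)‖ + (ε / 2) * ‖b i - b (i + 1 + 1)‖ := by
          rw [abs_of_nonneg (by linarith), abs_of_nonneg (by linarith)]
      _ ≤ (1 - ε) * 1 + (ε / 2) * 2 := by
          have := hdist i
          have := h2 i
          have h1 : (0:ℝ) ≤ 1 - ε := by linarith
          have h2' : (0:ℝ) ≤ ε / 2 := by linarith
          have := norm_nonneg (b i - b (i + 1))
          nlinarith [norm_nonneg (b i - b (i + 1 + 1))]
      _ = 1 := by ring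
  · have e2 : b (i + 1) - gtmStep k ε b i
        = (1 - ε) • (b (i + 1) - b i) + (ε / 2) • (b (i + 1) - b (i - 1)) := by
      simp only [gtmStep]
      module
    have hb2 : ‖b (i + 1) - b (i - 1)‖ ≤ 2 := by
      have := h2 (i - 1)
      rw [him] at this
      rwa [norm_sub_rev]
    have hb1 : ‖b (i + 1) - b i‖ ≤ 1 := by
      rw [norm_sub_rev]; exact hdist i
    rw [e2]
    calc ‖(1 - ε) • (b (i + 1) - b i) + (ε / 2) • (b (i + 1) - b (i - 1))‖
        ≤ ‖(1 - ε) • (b (i + 1) - b i)‖ + ‖(ε / 2) • (b (i + 1) - b (i - 1))‖ :=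
          norm_add_le _ _
      _ = |1 - ε| * ‖b (i + 1) - b i‖ + |ε / 2| * ‖b (i + 1) - b (i - 1)‖ := by
          rw [norm_smul, norm_smul, Real.norm_eq_abs, Real.norm_eq_abs]
      _ = (1 - ε) * ‖b (i + 1) - b i‖ + (ε / 2) * ‖b (i + 1) - b (i - 1)‖ := by
          rw [abs_of_nonneg (by linarith), abs_of_nonneg (by linarith)]
      _ ≤ (1 - ε) * 1 + (ε / 2) * 2 := by
          have h1 : (0:ℝ) ≤ 1 - ε := by linarith
          nlinarith [norm_nonneg (b (i + 1) - b i),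
            norm_nonneg (b (i + 1) - b (i - 1))]
      _ = 1 := by ring
  · have e3 : b i - gtmStep k ε b i
        = (ε / 2) • (b i - b (i - 1)) + (ε / 2) • (b i - b (i + 1)) := by
      simp only [gtmStep]
      module
    have hbm : ‖b i - b (i - 1)‖ ≤ 1 := by
      rw [norm_sub_rev]
      have := hdist (i - 1)
      rwa [him] at this
    rw [e3]
    calc ‖(ε / 2) • (b i - b (i - 1)) + (ε / 2) • (b i - b (i + 1))‖
        ≤ ‖(ε / 2) • (b i - b (i - 1))‖ + ‖(ε / 2) • (b i - b (i + 1))‖ :=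
          norm_add_le _ _
      _ = |ε / 2| * ‖b i - b (i - 1)‖ + |ε / 2| * ‖b i - b (i + 1)‖ := by
          rw [norm_smul, norm_smul, Real.norm_eq_abs]
      _ = (ε / 2) * ‖b i - b (i - 1)‖ + (ε / 2) * ‖b i - b (i + 1)‖ := by
          rw [abs_of_nonneg (by linarith)]
      _ ≤ (ε / 2) * 1 + (ε / 2) * 1 := by
          nlinarith [hdist i, norm_nonneg (b i - b (i - 1)),
            norm_nonneg (b i - b (i + 1))]
      _ = ε := by ring
end
end

section
/- Let k ≥ 3, let 0 ≤ ε ≤ 1, and let b : ZMod k → ℝ² be cyclically indexed points with ‖b_i − b_{i+1}‖ ≤ 1 for all i. Let b′ be the result of one ε-Go-to-the-Middle step, b′_i = (1−ε)·b_i + (ε/2)·(b_{i−1} + b_{i+1}), and let b″ be the result of applying the ε-Go-to-the-Middle step again to b′. Then for every index i: ‖b_i − b″_{i+1}‖ ≤ 1 + ε²/2, ‖b_{i+1} − b″_i‖ ≤ 1 + ε²/2, and ‖b_i − b″_i‖ ≤ 2ε. -/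
noncomputable section

lemma gtm_two (k : ℕ) (ε : ℝ) (b : ZMod k → Plane) (i : ZMod k) :
    gtmStep k ε (gtmStep k ε b) i =
      ((1 - ε) ^ 2 + ε ^ 2 / 2) • b i + (ε * (1 - ε)) • (b (i - 1) + b (i + 1))
        + (ε ^ 2 / 4) • (b (i - 2) + b (i + 2)) := by
  simp only [gtmStep]
  rw [show i - 1 - 1 = i - 2 from by ring, show i - 1 + 1 = i from by ring,
    show i + 1 - 1 = i from by ring, show i + 1 + 1 = i + 2 from by ring]
  module

lemma norm_comb4 {c1 c2 c3 c4 : ℝ} {d1 d2 d3 d4 : Plane}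
    (h1 : ‖d1‖ ≤ 1) (h2 : ‖d2‖ ≤ 1) (h3 : ‖d3‖ ≤ 1) (h4 : ‖d4‖ ≤ 1) :
    ‖c1 • d1 + c2 • d2 + c3 • d3 + c4 • d4‖ ≤ |c1| + |c2| + |c3| + |c4| := by
  calc ‖c1 • d1 + c2 • d2 + c3 • d3 + c4 • d4‖
      ≤ ‖c1 • d1‖ + ‖c2 • d2‖ + ‖c3 • d3‖ + ‖c4 • d4‖ := by
        calc _ ≤ ‖c1 • d1 + c2 • d2 + c3 • d3‖ + ‖c4 • d4‖ := norm_add_le _ _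
          _ ≤ ‖c1 • d1‖ + ‖c2 • d2‖ + ‖c3 • d3‖ + ‖c4 • d4‖ := by
              gcongr
              calc _ ≤ ‖c1 • d1 + c2 • d2‖ + ‖c3 • d3‖ := norm_add_le _ _
                _ ≤ _ := by gcongr; exact norm_add_le _ _
    _ ≤ |c1| + |c2| + |c3| + |c4| := by
        simp only [norm_smul, Real.norm_eq_abs]
        gcongr <;> first
          | exact mul_le_of_le_one_right (abs_nonneg _) ‹_›
          | positivity

theorem gtm_distance_bounds_two_steps
    (k : ℕ) (hk : 3 ≤ k)
    (ε : ℝ) (hε : 0 ≤ ε) (hε' : ε ≤ 1)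
    (b : ZMod k → Plane)
    (hdist : ∀ i : ZMod k, ‖b i - b (i + 1)‖ ≤ 1) :
    ∀ i : ZMod k,
      ‖b i - gtmStep k ε (gtmStep k ε b) (i + 1)‖ ≤ 1 + ε ^ 2 / 2 ∧
      ‖b (i + 1) - gtmStep k ε (gtmStep k ε b) i‖ ≤ 1 + ε ^ 2 / 2 ∧
      ‖b i - gtmStep k ε (gtmStep k ε b) i‖ ≤ 2 * ε := by
  intro i
  set α : ℝ := (1 - ε) ^ 2 + ε ^ 2 / 2 with hα
  set β : ℝ := ε * (1 - ε) with hβ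
  set γ : ℝ := ε ^ 2 / 4 with hγ
  have hβ0 : 0 ≤ β := mul_nonneg hε (by linarith)
  have hγ0 : 0 ≤ γ := by positivity
  have hα0 : 0 ≤ α := by positivity
  refine ⟨?_, ?_, ?_⟩
  · have key : b i - gtmStep k ε (gtmStep k ε b) (i + 1) =
        (α + β + γ) • (b i - b (i + 1)) + (β + γ) • (b (i + 1) - b (i + 1 + 1))
          + γ • (b (i + 2) - b (i + 2 + 1)) + (-γ) • (b (i - 1) - b (i - 1 + 1)) := by
      rw [gtm_two, show i + 1 - 1 = i from by ring, show i + 1 + 2 = i + 2 + 1 from by ring,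
        show i + 1 - 2 = i - 1 from by ring, show i - 1 + 1 = i from by ring,
        show i + 1 + 1 = i + 2 from by ring]
      module
    rw [key]
    calc _ ≤ |α + β + γ| + |β + γ| + |γ| + |-γ| :=
          norm_comb4 (hdist _) (hdist _) (hdist _) (hdist _)
      _ ≤ 1 + ε ^ 2 / 2 := by
          rw [abs_of_nonneg (by linarith), abs_of_nonneg (by linarith),
            abs_of_nonneg hγ0, abs_neg, abs_of_nonneg hγ0, hα, hβ, hγ]
          ring_nf
          nlinarith
  · have key : b (i + 1) - gtmStep k ε (gtmStep k ε b) i =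
        (-(α + β + γ)) • (b i - b (i + 1)) + (-(β + γ)) • (b (i - 1) - b (i - 1 + 1))
          + (-γ) • (b (i - 2) - b (i - 2 + 1)) + γ • (b (i + 1) - b (i + 1 + 1)) := by
      rw [gtm_two, show i - 1 + 1 = i from by ring, show i - 2 + 1 = i - 1 from by ring,
        show i + 1 + 1 = i + 2 from by ring]
      module
    rw [key]
    calc _ ≤ |-(α + β + γ)| + |-(β + γ)| + |-γ| + |γ| :=
          norm_comb4 (hdist _) (hdist _) (hdist _) (hdist _)
      _ ≤ 1 + ε ^ 2 / 2 := by
          rw [abs_neg, abs_neg, abs_neg, abs_of_nonneg (by linarith),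
            abs_of_nonneg (by linarith), abs_of_nonneg hγ0, hα, hβ, hγ]
          ring_nf
          nlinarith
  · have key : b i - gtmStep k ε (gtmStep k ε b) i =
        (β + γ) • (b i - b (i + 1)) + (-(β + γ)) • (b (i - 1) - b (i - 1 + 1))
          + (-γ) • (b (i - 2) - b (i - 2 + 1)) + γ • (b (i + 1) - b (i + 1 + 1)) := by
      rw [gtm_two, show i - 1 + 1 = i from by ring, show i - 2 + 1 = i - 1 from by ring,
        show i + 1 + 1 = i + 2 from by ring]
      module
    rw [key]
    calc _ ≤ |β + γ| + |-(β + γ)| + |-γ| + |γ| :=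
          norm_comb4 (hdist _) (hdist _) (hdist _) (hdist _)
      _ ≤ 2 * ε := by
          rw [abs_neg, abs_neg, abs_of_nonneg (by linarith), abs_of_nonneg hγ0, hβ, hγ]
          nlinarith
end
end

section
/- Let A, B, C, D ∈ ℝ² be four points, no three of which are collinear, forming a convex quadrilateral with vertices in cyclic order A, D, C, B (equivalently: the open diagonal segment from A to C and the open diagonal segment from D to B intersect). Define the bilinear interpolation map φ : [0,1] × [0,1] → ℝ² by φ(x,y) = (1−y)·((1−x)·A + x·D) + y·((1−x)·B + x·C). Then φ is injective on [0,1] × [0,1] and its image is exactly the quadrilateral, i.e. φ([0,1]²) = convexHull{A, B, C, D}. In particular, the normalized coordinate system (x,y) inside a non-degenerate convex quadrilateral determines each point of the quadrilateral uniquely. -/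
/-!
An affine chart of the plane sends `0, (1, 0), (0, 1)` to `A, B, D`; the meeting diagonals put `C`
at a point `(a, b)` with `a, b > 0` and `a + b > 1`, and the patch becomes
`φ (x, y) = (y (1 + (a - 1) x), x (1 + (b - 1) y))`. Two preimages of a point have the same
product `xy`, because `(xy - x'y') (1 + (a - 1) x + (b - 1) y') = 0` and the second factor is
positive on the square; the coordinates then follow linearly. Conversely, a point of the hull lies
in the four half-planes cut out by the edges; the intermediate value theorem finds the `x` whose
segment `y ↦ φ (x, y)` passes through it, and the half-planes of the edges `AD` and `BC` force
`y ∈ [0, 1]`.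
-/

open AffineMap Set

section Patch

variable {k V P V₂ P₂ : Type*} [Ring k] [AddCommGroup V] [Module k V] [AddTorsor V P]
  [AddCommGroup V₂] [Module k V₂] [AddTorsor V₂ P₂]

def bilinearPatch (A B C D : P) (p : k × k) : P :=
  lineMap (lineMap A D p.1) (lineMap B C p.1) p.2

theorem AffineMap.apply_bilinearPatch (f : P →ᵃ[k] P₂) (A B C D : P) (p : k × k) :
    f (bilinearPatch A B C D p) = bilinearPatch (f A) (f B) (f C) (f D) p := by
  simp only [bilinearPatch, AffineMap.apply_lineMap]

end Patch

theorem bilinearPatch_mem_convexHull {E : Type*} [AddCommGroup E] [Module ℝ E] (A B C D : E)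
    {p : ℝ × ℝ} (hp : p ∈ Icc (0 : ℝ) 1 ×ˢ Icc (0 : ℝ) 1) :
    bilinearPatch A B C D p ∈ convexHull ℝ {A, B, C, D} := by
  have hconv := convex_convexHull ℝ ({A, B, C, D} : Set E)
  have hmem : {A, B, C, D} ⊆ convexHull ℝ ({A, B, C, D} : Set E) := subset_convexHull ℝ _
  simp only [insert_subset_iff, singleton_subset_iff] at hmem
  exact hconv.lineMap_mem (hconv.lineMap_mem hmem.1 hmem.2.2.2 hp.1)
    (hconv.lineMap_mem hmem.2.1 hmem.2.2.1 hp.1) hp.2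

theorem one_sub_mul_add_mul_pos {c d z : ℝ} (hc : 0 < c) (hd : 0 < d) (hz₀ : 0 ≤ z)
    (hz₁ : z ≤ 1) : 0 < (1 - z) * c + z * d := by
  simpa [lineMap_apply_module, smul_eq_mul] using (convex_Ioi (0 : ℝ)).lineMap_mem hc hd ⟨hz₀, hz₁⟩

section Standard

variable {a b : ℝ}

theorem bilinearPatch_std_apply (a b x y : ℝ) :
    bilinearPatch (0 : ℝ × ℝ) (1, 0) (a, b) (0, 1) (x, y) =
      (y * (1 + (a - 1) * x), x * (1 + (b - 1) * y)) := by
  simp only [bilinearPatch, lineMap_apply_module, smul_zero, Prod.smul_mk, smul_eq_mul, mul_zero,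
    mul_one, zero_add, Prod.mk_add_mk]
  congr 1 <;> ring

theorem injOn_bilinearPatch_std (ha : 0 < a) (hb : 0 < b) (hab : 1 < a + b) :
    InjOn (bilinearPatch (0 : ℝ × ℝ) (1, 0) (a, b) (0, 1)) (Icc (0 : ℝ) 1 ×ˢ Icc (0 : ℝ) 1) := by
  rintro ⟨x, y⟩ ⟨⟨hx₀, hx₁⟩, -⟩ ⟨x', y'⟩ ⟨-, hy₀', hy₁'⟩ h
  simp only [bilinearPatch_std_apply, Prod.mk.injEq] at h
  obtain ⟨h₁, h₂⟩ := h
  have hpos : 0 < 1 + (a - 1) * x + (b - 1) * y' := by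
    have := one_sub_mul_add_mul_pos (one_sub_mul_add_mul_pos one_pos hb hy₀' hy₁')
      (one_sub_mul_add_mul_pos ha (sub_pos.2 hab) hy₀' hy₁') hx₀ hx₁
    linarith
  have hw : x * y = x' * y' := by
    have h : (x * y - x' * y') * (1 + (a - 1) * x + (b - 1) * y') = 0 := by
      linear_combination x * h₁ + y' * h₂
    simpa [sub_eq_zero, hpos.ne'] using h
  rw [Prod.mk.injEq]
  constructor
  · linear_combination h₂ - (b - 1) * hw
  · linear_combination h₁ - (a - 1) * hw

def stdQuadrilateral (a b : ℝ) : Set (ℝ × ℝ) :=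
  {p | 0 ≤ p.1 ∧ 0 ≤ p.2 ∧ 0 ≤ b * (1 - p.1) + (a - 1) * p.2 ∧ 0 ≤ a * (1 - p.2) + (b - 1) * p.1}

theorem convex_stdQuadrilateral (a b : ℝ) : Convex ℝ (stdQuadrilateral a b) := by
  rintro ⟨p₁, p₂⟩ ⟨hp₁, hp₂, hp₃, hp₄⟩ ⟨q₁, q₂⟩ ⟨hq₁, hq₂, hq₃, hq₄⟩ s t hs ht hst
  obtain rfl : t = 1 - s := by linarith
  simp only [stdQuadrilateral, mem_ofPred_eq, Prod.smul_mk, Prod.mk_add_mk, smul_eq_mul]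
  refine ⟨by positivity, by positivity, by nlinarith, by nlinarith⟩

theorem convexHull_subset_stdQuadrilateral (ha : 0 < a) (hb : 0 < b) (hab : 1 < a + b) :
    convexHull ℝ {0, (1, 0), (a, b), (0, 1)} ⊆ stdQuadrilateral a b := by
  refine convexHull_min ?_ (convex_stdQuadrilateral a b)
  simp only [insert_subset_iff, singleton_subset_iff, stdQuadrilateral, mem_ofPred_eq]
  norm_num
  exact ⟨⟨hb.le, ha.le⟩, by linarith, ⟨ha.le, hb.le, le_of_eq (by ring), le_of_eq (by ring)⟩,
    by linarith⟩

theorem stdQuadrilateral_subset_image_bilinearPatch (ha : 0 < a) (hb : 0 < b) (hab : 1 < a + b) :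
    stdQuadrilateral a b ⊆
      bilinearPatch (0 : ℝ × ℝ) (1, 0) (a, b) (0, 1) '' (Icc (0 : ℝ) 1 ×ˢ Icc (0 : ℝ) 1) := by
  rintro ⟨P, Q⟩ ⟨hP, hQ, hBC, hCD⟩
  -- the quadratic vanishes exactly when `(P, Q)` lies on the line through `φ (x, 0)` and `φ (x, 1)`
  obtain ⟨x, ⟨hx₀, hx₁⟩, hx⟩ : ∃ x ∈ Icc (0 : ℝ) 1,
      x * (1 + (a - 1) * x) + (b - 1) * x * P - Q * (1 + (a - 1) * x) = 0 :=
    intermediate_value_Icc zero_le_one (by fun_prop) ⟨by linarith, by linarith⟩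
  have hr : 0 < 1 + (a - 1) * x := by
    have := one_sub_mul_add_mul_pos one_pos ha hx₀ hx₁
    linarith
  set y := P / (1 + (a - 1) * x)
  have hP' : P = y * (1 + (a - 1) * x) := (div_mul_cancel₀ _ hr.ne').symm
  have hQ' : Q = x * (1 + (b - 1) * y) := by
    refine mul_right_cancel₀ hr.ne' ?_
    linear_combination -hx + (b - 1) * x * hP'
  have hBC' : b * (1 - P) + (a - 1) * Q = (1 - y) * (b + (a - 1) * x) := by
    rw [hP', hQ']; ring
  have hs : 0 < b + (a - 1) * x := by
    have := one_sub_mul_add_mul_pos hb (sub_pos.2 hab) hx₀ hx₁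
    linarith
  refine ⟨(x, y), ⟨⟨hx₀, hx₁⟩, div_nonneg hP hr.le, ?_⟩, ?_⟩
  · have := nonneg_of_mul_nonneg_left (hBC' ▸ hBC) hs
    linarith
  · rw [bilinearPatch_std_apply, ← hP', ← hQ']

theorem image_bilinearPatch_std (ha : 0 < a) (hb : 0 < b) (hab : 1 < a + b) :
    bilinearPatch (0 : ℝ × ℝ) (1, 0) (a, b) (0, 1) '' (Icc (0 : ℝ) 1 ×ˢ Icc (0 : ℝ) 1) =
      convexHull ℝ {0, (1, 0), (a, b), (0, 1)} :=
  (image_subset_iff.2 fun _ hp ↦ bilinearPatch_mem_convexHull _ _ _ _ hp).antisymm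
    ((convexHull_subset_stdQuadrilateral ha hb hab).trans
      (stdQuadrilateral_subset_image_bilinearPatch ha hb hab))

end Standard

section General

variable {E : Type*} [AddCommGroup E] [Module ℝ E]

def planeChart (A u v : E) : ℝ × ℝ →ᵃ[ℝ] E :=
  ((LinearMap.toSpanSingleton ℝ E u).coprod (LinearMap.toSpanSingleton ℝ E v)).toAffineMap +
    AffineMap.const ℝ (ℝ × ℝ) A

@[simp]
theorem planeChart_apply (A u v : E) (p : ℝ × ℝ) : planeChart A u v p = p.1 • u + p.2 • v + A :=
  rfl

theorem planeChart_injective {A u v : E} (huv : LinearIndependent ℝ ![u, v]) :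
    Function.Injective (planeChart A u v) := by
  intro p q h
  have := LinearIndependent.pair_iff.1 huv (p.1 - q.1) (p.2 - q.2) (by
    simp only [planeChart_apply, add_left_inj] at h
    linear_combination (norm := module) h)
  exact Prod.ext (sub_eq_zero.1 this.1) (sub_eq_zero.1 this.2)

theorem exists_eq_planeChart_of_openSegment_inter_nonempty {A B C D : E}
    (h : (openSegment ℝ A C ∩ openSegment ℝ D B).Nonempty) :
    ∃ a b : ℝ, 0 < a ∧ 0 < b ∧ 1 < a + b ∧ C = planeChart A (B - A) (D - A) (a, b) := by
  obtain ⟨z, ⟨s', s, hs', hs, hss, rfl⟩, ⟨t', t, ht', ht, htt, hz⟩⟩ := h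
  refine ⟨t / s, t' / s, by positivity, by positivity, ?_, ?_⟩
  · rw [← add_div, one_lt_div hs]
    linarith
  · apply smul_right_injective E hs.ne'
    simp only [planeChart_apply, smul_add, smul_smul, mul_div_cancel₀ _ hs.ne']
    linear_combination (norm := module) -hz + (htt - hss) • A

theorem bilinearPatch_eq_planeChart_comp {A B C D : E} {a b : ℝ}
    (hC : C = planeChart A (B - A) (D - A) (a, b)) :
    bilinearPatch A B C D =
      planeChart A (B - A) (D - A) ∘ bilinearPatch (k := ℝ) 0 (1, 0) (a, b) (0, 1) := by
  funext p
  simp [AffineMap.apply_bilinearPatch, hC]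

theorem injOn_bilinearPatch {A B C D : E} (hAB : LinearIndependent ℝ ![B - A, D - A])
    (hconv : (openSegment ℝ A C ∩ openSegment ℝ D B).Nonempty) :
    InjOn (bilinearPatch A B C D) (Icc (0 : ℝ) 1 ×ˢ Icc (0 : ℝ) 1) := by
  obtain ⟨a, b, ha, hb, hab, hC⟩ := exists_eq_planeChart_of_openSegment_inter_nonempty hconv
  rw [bilinearPatch_eq_planeChart_comp hC]
  exact (planeChart_injective hAB).comp_injOn (injOn_bilinearPatch_std ha hb hab)

theorem image_bilinearPatch {A B C D : E}
    (hconv : (openSegment ℝ A C ∩ openSegment ℝ D B).Nonempty) :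
    bilinearPatch A B C D '' (Icc (0 : ℝ) 1 ×ˢ Icc (0 : ℝ) 1) = convexHull ℝ {A, B, C, D} := by
  obtain ⟨a, b, ha, hb, hab, hC⟩ := exists_eq_planeChart_of_openSegment_inter_nonempty hconv
  rw [bilinearPatch_eq_planeChart_comp hC, image_comp, image_bilinearPatch_std ha hb hab,
    AffineMap.image_convexHull]
  simp [image_insert_eq, hC]

end General

theorem linearIndependent_sub_of_not_collinear {k V : Type*} [Field k] [AddCommGroup V]
    [Module k V] {A B D : V} (h : ¬Collinear k {A, B, D}) :
    LinearIndependent k ![B - A, D - A] := by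
  refine LinearIndependent.pair_iff.2 fun s t hst ↦ ?_
  have := (affineIndependent_iff_not_collinear_set.2 h).eq_zero_of_sum_eq_zero
    (s := Finset.univ) (w := ![-(s + t), s, t]) (by simp [Fin.sum_univ_three]) (by
      simp only [Fin.sum_univ_three, Matrix.cons_val_zero, Matrix.cons_val_one, Matrix.cons_val]
      linear_combination (norm := module) hst)
  exact ⟨this 1 (Finset.mem_univ _), this 2 (Finset.mem_univ _)⟩

theorem bilinear_coordinates_of_convex_quadrilateral_general
    (A B C D : ℝ × ℝ)
    (hABD : ¬Collinear ℝ ({A, B, D} : Set (ℝ × ℝ)))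
    (hconv : (openSegment ℝ A C ∩ openSegment ℝ D B).Nonempty)
    (φ : ℝ × ℝ → ℝ × ℝ)
    (hφ : ∀ x y : ℝ, φ (x, y) =
      (1 - y) • ((1 - x) • A + x • D) + y • ((1 - x) • B + x • C)) :
    Set.InjOn φ (Set.Icc (0 : ℝ) 1 ×ˢ Set.Icc (0 : ℝ) 1) ∧
      φ '' (Set.Icc (0 : ℝ) 1 ×ˢ Set.Icc (0 : ℝ) 1) =
        convexHull ℝ ({A, B, C, D} : Set (ℝ × ℝ)) := by
  obtain rfl : φ = bilinearPatch A B C D := funext fun ⟨x, y⟩ ↦ by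
    simp [hφ, bilinearPatch, lineMap_apply_module]
  exact ⟨injOn_bilinearPatch (linearIndependent_sub_of_not_collinear hABD) hconv,
    image_bilinearPatch hconv⟩

theorem bilinear_coordinates_of_convex_quadrilateral
    (A B C D : ℝ × ℝ)
    (hABC : ¬Collinear ℝ ({A, B, C} : Set (ℝ × ℝ)))
    (hABD : ¬Collinear ℝ ({A, B, D} : Set (ℝ × ℝ)))
    (hACD : ¬Collinear ℝ ({A, C, D} : Set (ℝ × ℝ)))
    (hBCD : ¬Collinear ℝ ({B, C, D} : Set (ℝ × ℝ)))
    (hconv : (openSegment ℝ A C ∩ openSegment ℝ D B).Nonempty)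
    (φ : ℝ × ℝ → ℝ × ℝ)
    (hφ : ∀ x y : ℝ, φ (x, y) =
      (1 - y) • ((1 - x) • A + x • D) + y • ((1 - x) • B + x • C)) :
    Set.InjOn φ (Set.Icc (0 : ℝ) 1 ×ˢ Set.Icc (0 : ℝ) 1) ∧
      φ '' (Set.Icc (0 : ℝ) 1 ×ˢ Set.Icc (0 : ℝ) 1) =
        convexHull ℝ ({A, B, C, D} : Set (ℝ × ℝ)) :=
  bilinear_coordinates_of_convex_quadrilateral_general A B C D hABD hconv φ hφ
end
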